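/- Let G be a stabilizer group of full rank N_A = |I| on I = I₁ ⊕ I₂ (so the corresponding stabilizer state is a pure state and ρ = 2^{-N_A}·Σ_{g∈G} g is a rank-one projector). If g ∈ G is such that its A₂-restriction p_{A₂}(g) commutes with the A₂-restriction p_{A₂}(h) of every element h ∈ G, then g lies in the product G_{A1}·G_{A2} of the subgroups of elements supported in A₁ and in A₂. Consequently, for a pure stabilizer state, the parameter r in any canonical generating set of a complementary subgroup is zero, and the partial-transpose negativity equals half the mutual information of A₁ and A₂. -/

import Mathlib

open scoped ComplexOrder Matrix

noncomputable section

/-- The single-qubit Pauli matrices `σ⁰, σˣ, σʸ, σᶻ`. -/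
def pauli : Fin 4 → Matrix (Fin 2) (Fin 2) ℂ :=
  ![1, !![0, 1; 1, 0], !![0, -Complex.I; Complex.I, 0], !![1, 0; 0, -1]]

/-- Configurations of the qubits on `I₁ ⊕ I₂`, presented in factorized form. -/
abbrev Config (I₁ I₂ : Type) := (I₁ → Fin 2) × (I₂ → Fin 2)

variable {I₁ I₂ : Type} [Fintype I₁] [Fintype I₂] [DecidableEq I₁] [DecidableEq I₂]

/-- The sign-free tensor product `⨂_{i ∈ I₁ ⊕ I₂} σ^{a(i)}` of single-qubit Pauli
matrices, as a matrix on the factorized configuration space. -/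
def pauliTensor (a : I₁ ⊕ I₂ → Fin 4) :
    Matrix (Config I₁ I₂) (Config I₁ I₂) ℂ :=
  fun c c' => ∏ i, pauli (a i) (Sum.elim c.1 c.2 i) (Sum.elim c'.1 c'.2 i)

/-- A Pauli operator on `I₁ ⊕ I₂`: `ε·⨂ᵢ σ^{a(i)}` with `ε ∈ {1,−1}`. -/
def IsPauli (M : Matrix (Config I₁ I₂) (Config I₁ I₂) ℂ) : Prop :=
  ∃ (ε : ℂ) (a : I₁ ⊕ I₂ → Fin 4), (ε = 1 ∨ ε = -1) ∧ M = ε • pauliTensor a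

/-- A Pauli operator supported in `A₁`, i.e. acting trivially on all sites of `I₂`. -/
def SupportedIn1 (M : Matrix (Config I₁ I₂) (Config I₁ I₂) ℂ) : Prop :=
  ∃ (ε : ℂ) (a : I₁ ⊕ I₂ → Fin 4), (ε = 1 ∨ ε = -1) ∧ M = ε • pauliTensor a ∧
    ∀ i : I₂, a (Sum.inr i) = 0

/-- A Pauli operator supported in `A₂`, i.e. acting trivially on all sites of `I₁`. -/
def SupportedIn2 (M : Matrix (Config I₁ I₂) (Config I₁ I₂) ℂ) : Prop :=
  ∃ (ε : ℂ) (a : I₁ ⊕ I₂ → Fin 4), (ε = 1 ∨ ε = -1) ∧ M = ε • pauliTensor a ∧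
    ∀ i : I₁, a (Sum.inl i) = 0

/-- A stabilizer group on `I₁ ⊕ I₂`: a finite abelian group of Pauli operators under
matrix multiplication not containing `-1`; every element is Hermitian and squares to
the identity. -/
structure StabilizerGroup (I₁ I₂ : Type) [Fintype I₁] [Fintype I₂]
    [DecidableEq I₁] [DecidableEq I₂] where
  carrier : Finset (Matrix (Config I₁ I₂) (Config I₁ I₂) ℂ)
  isPauli : ∀ g ∈ carrier, IsPauli g
  one_mem : (1 : Matrix (Config I₁ I₂) (Config I₁ I₂) ℂ) ∈ carrier
  mul_mem : ∀ g ∈ carrier, ∀ h ∈ carrier, g * h ∈ carrier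
  mul_comm : ∀ g ∈ carrier, ∀ h ∈ carrier, g * h = h * g
  neg_one_not_mem : (-1 : Matrix (Config I₁ I₂) (Config I₁ I₂) ℂ) ∉ carrier
  hermitian : ∀ g ∈ carrier, g.IsHermitian
  sq_eq_one : ∀ g ∈ carrier, g * g = 1

/-- The stabilizer density matrix `ρ = 2^{−N_A}·Σ_{g ∈ G} g`. -/
def stabDensity (G : StabilizerGroup I₁ I₂) :
    Matrix (Config I₁ I₂) (Config I₁ I₂) ℂ :=
  ((2 : ℂ) ^ (Fintype.card I₁ + Fintype.card I₂))⁻¹ • ∑ g ∈ G.carrier, g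

/-- The realignment of a matrix on a bipartite system:
`R_M[(c₁,c₁'),(c₂,c₂')] = M[(c₁,c₂),(c₁',c₂')]`. -/
def realign {C₁ C₂ : Type*} (M : Matrix (C₁ × C₂) (C₁ × C₂) ℂ) :
    Matrix (C₁ × C₁) (C₂ × C₂) ℂ :=
  fun p q => M (p.1, q.1) (p.2, q.2)

/-- The partial transpose on the second factor:
`M^{T₂}[(c₁,c₂),(c₁',c₂')] = M[(c₁,c₂'),(c₁',c₂)]`. -/
def ptranspose {C₁ C₂ R : Type*} (M : Matrix (C₁ × C₂) (C₁ × C₂) R) :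
    Matrix (C₁ × C₂) (C₁ × C₂) R :=
  fun c c' => M (c.1, c'.2) (c'.1, c.2)

/-- The trace norm `‖M‖₁ = Tr√(MᴴM)` of a complex matrix. -/
def traceNorm {m n : Type*} [Fintype m] [Fintype n] [DecidableEq n]
    (M : Matrix m n ℂ) : ℝ :=
  ((Matrix.posSemidef_conjTranspose_mul_self M).1.eigenvectorUnitary.1 *
    Matrix.diagonal (((↑) : ℝ → ℂ) ∘ Real.sqrt ∘ (Matrix.posSemidef_conjTranspose_mul_self M).1.eigenvalues) *
    (star (Matrix.posSemidef_conjTranspose_mul_self M).1.eigenvectorUnitary :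
      Matrix n n ℂ)).trace.re

end

noncomputable section

variable {I₁ I₂ : Type} [Fintype I₁] [Fintype I₂] [DecidableEq I₁] [DecidableEq I₂]

/-- Sign-free tensor product of single-qubit Pauli matrices on `I₂` alone. -/
def pauliTensorOn2 (b : I₂ → Fin 4) : Matrix (I₂ → Fin 2) (I₂ → Fin 2) ℂ :=
  fun c c' => ∏ i, pauli (b i) (c i) (c' i)

open scoped Classical in
/-- The `A₂`-restriction `p_{A₂}(g)` of a Pauli operator `g = ε·(P₁ ⊗ P₂)`, namely the
sign-free tensor factor `P₂` acting on `I₂` (and `0` on non-Pauli matrices). -/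
def pA2 (M : Matrix (Config I₁ I₂) (Config I₁ I₂) ℂ) :
    Matrix (I₂ → Fin 2) (I₂ → Fin 2) ℂ :=
  if h : IsPauli M then
    pauliTensorOn2 (fun i => Classical.choose (Classical.choose_spec h) (Sum.inr i))
  else 0

/-- `z`, `w`, `wbar` form a canonical generating set with parameters `(r,s)` of the
group with carrier `Hcar`: they are independent generators of `Hcar` (so
`|Hcar| = 2^{r+2s}`), each `p_{A₂}(zᵢ)` commutes with the `A₂`-restrictions of all
listed generators, and each `p_{A₂}(wᵢ)` anticommutes with `p_{A₂}(w̄ᵢ)` and commutes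
with the `A₂`-restrictions of all other listed generators. -/
def CanonicalGenSet (Hcar : Finset (Matrix (Config I₁ I₂) (Config I₁ I₂) ℂ))
    (r s : ℕ) (z : Fin r → Matrix (Config I₁ I₂) (Config I₁ I₂) ℂ)
    (w wbar : Fin s → Matrix (Config I₁ I₂) (Config I₁ I₂) ℂ) : Prop :=
  (∀ i, z i ∈ Hcar) ∧ (∀ i, w i ∈ Hcar) ∧ (∀ i, wbar i ∈ Hcar) ∧
  (∀ g ∈ Hcar, g ∈ Submonoid.closure (Set.range z ∪ Set.range w ∪ Set.range wbar)) ∧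
  Hcar.card = 2 ^ (r + 2 * s) ∧
  (∀ i j, Commute (pA2 (z i)) (pA2 (z j))) ∧
  (∀ i j, Commute (pA2 (z i)) (pA2 (w j))) ∧
  (∀ i j, Commute (pA2 (z i)) (pA2 (wbar j))) ∧
  (∀ i j, Commute (pA2 (w i)) (pA2 (w j))) ∧
  (∀ i j, Commute (pA2 (wbar i)) (pA2 (wbar j))) ∧
  (∀ i j, i ≠ j → Commute (pA2 (w i)) (pA2 (wbar j))) ∧
  (∀ i, pA2 (w i) * pA2 (wbar i) = -(pA2 (wbar i) * pA2 (w i)))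

end


/-!
Let `P` be the Pauli operator acting as `p_{A₂}(g)` on `A₂` and trivially on `A₁`. The hypothesis
makes `P` commute with every element of `G`, hence with `ρ = 2^{-N}·Σ_{h ∈ G} h`. If neither `P`
nor `-P` were in `G`, then `tr(ρ P) = 0`, and `ρ · (1 + P)/2` would be an idempotent (a product of
commuting idempotents, `ρ` being one because `G` has full rank) of trace `1/2`, which is absurd
since the trace of an idempotent is its rank.
So `±P ∈ G`, and `g = (g · (±P)) · (±P)` with `g · (±P)` supported in `A₁`.
-/

open Matrix

open scoped Kronecker

namespace Matrix

variable {ι l m n α : Type*} [Fintype ι]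

def piKronecker [CommMonoid α] (M : ι → Matrix l m α) : Matrix (ι → l) (ι → m) α :=
  fun f f' => ∏ i, M i (f i) (f' i)

theorem piKronecker_mul [DecidableEq ι] [Fintype m] [CommSemiring α] (M : ι → Matrix l m α)
    (N : ι → Matrix m n α) :
    piKronecker M * piKronecker N = piKronecker fun i => M i * N i := by
  ext f f'
  simp only [mul_apply, piKronecker, ← Finset.prod_mul_distrib]
  exact (Fintype.prod_sum fun i j => M i (f i) j * N i j (f' i)).symm

theorem piKronecker_one [DecidableEq m] [CommMonoidWithZero α] :
    piKronecker (fun _ : ι => (1 : Matrix m m α)) = 1 := by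
  ext f f'
  by_cases h : f = f'
  · subst h
    simp [piKronecker]
  · obtain ⟨i, hi⟩ := Function.ne_iff.mp h
    rw [one_apply_ne h]
    exact Finset.prod_eq_zero (Finset.mem_univ i) (one_apply_ne hi)

theorem trace_piKronecker [DecidableEq ι] [Fintype m] [CommSemiring α] (M : ι → Matrix m m α) :
    (piKronecker M).trace = ∏ i, (M i).trace :=
  (Fintype.prod_sum fun i j => M i j j).symm

theorem trace_eq_finrank_of_isIdempotentElem {K : Type*} [Field K] [Fintype m] [DecidableEq m]
    {A : Matrix m m K} (hA : IsIdempotentElem A) :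
    A.trace = Module.finrank K (LinearMap.range A.toLin') := by
  rw [← trace_toLin'_eq]
  exact (LinearMap.IsIdempotentElem.isProj_range (toLin' A) (hA.map toLinAlgEquiv')).trace

end Matrix

section PauliAlgebra

theorem pauli_mul_self (b : Fin 4) : pauli b * pauli b = 1 := by
  fin_cases b <;> simp [pauli, one_fin_two]

theorem trace_pauli_mul_of_ne {b c : Fin 4} (h : b ≠ c) : (pauli b * pauli c).trace = 0 := by
  fin_cases b <;> fin_cases c <;>
    simp_all [pauli, one_fin_two, trace_fin_two]

variable {ι : Type} [Fintype ι]

theorem pauliTensorOn2_eq_piKronecker (b : ι → Fin 4) :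
    pauliTensorOn2 b = piKronecker fun i => pauli (b i) := rfl

theorem pauliTensorOn2_zero : pauliTensorOn2 (0 : ι → Fin 4) = 1 :=
  piKronecker_one

theorem pauliTensorOn2_mul_self [DecidableEq ι] (b : ι → Fin 4) :
    pauliTensorOn2 b * pauliTensorOn2 b = 1 := by
  simp only [pauliTensorOn2_eq_piKronecker, piKronecker_mul, pauli_mul_self, piKronecker_one]

theorem trace_pauliTensorOn2_mul_of_ne [DecidableEq ι] {b c : ι → Fin 4} (h : b ≠ c) :
    (pauliTensorOn2 b * pauliTensorOn2 c).trace = 0 := by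
  obtain ⟨i, hi⟩ := Function.ne_iff.mp h
  rw [pauliTensorOn2_eq_piKronecker, pauliTensorOn2_eq_piKronecker, piKronecker_mul,
    trace_piKronecker]
  exact Finset.prod_eq_zero (Finset.mem_univ i) (trace_pauli_mul_of_ne hi)

variable {I₁ I₂ : Type} [Fintype I₁] [Fintype I₂]

theorem pauliTensor_eq_kronecker (a : I₁ ⊕ I₂ → Fin 4) :
    pauliTensor a = pauliTensorOn2 (a ∘ Sum.inl) ⊗ₖ pauliTensorOn2 (a ∘ Sum.inr) := by
  ext c c'
  exact Fintype.prod_sum_type _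

theorem pauliTensor_zero : pauliTensor (0 : I₁ ⊕ I₂ → Fin 4) = 1 := by
  rw [pauliTensor_eq_kronecker]
  exact (congrArg₂ _ pauliTensorOn2_zero pauliTensorOn2_zero).trans one_kronecker_one

variable [DecidableEq I₁] [DecidableEq I₂]

theorem pauliTensor_mul_self (a : I₁ ⊕ I₂ → Fin 4) : pauliTensor a * pauliTensor a = 1 := by
  rw [pauliTensor_eq_kronecker, ← mul_kronecker_mul, pauliTensorOn2_mul_self,
    pauliTensorOn2_mul_self, one_kronecker_one]

theorem trace_pauliTensor_mul_of_ne {a b : I₁ ⊕ I₂ → Fin 4} (h : a ≠ b) :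
    (pauliTensor a * pauliTensor b).trace = 0 := by
  rw [pauliTensor_eq_kronecker, pauliTensor_eq_kronecker, ← mul_kronecker_mul, trace_kronecker]
  obtain ⟨i | i, hi⟩ := Function.ne_iff.mp h
  · rw [trace_pauliTensorOn2_mul_of_ne (Function.ne_iff.mpr ⟨i, hi⟩), zero_mul]
  · rw [trace_pauliTensorOn2_mul_of_ne (Function.ne_iff.mpr ⟨i, hi⟩), mul_zero]

theorem trace_pauliTensor_of_ne_zero {a : I₁ ⊕ I₂ → Fin 4} (h : a ≠ 0) :
    (pauliTensor a).trace = 0 := by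
  simpa [pauliTensor_zero] using trace_pauliTensor_mul_of_ne h

theorem trace_one_config :
    (1 : Matrix (Config I₁ I₂) (Config I₁ I₂) ℂ).trace =
      2 ^ (Fintype.card I₁ + Fintype.card I₂) := by
  simp [Fintype.card_prod, pow_add]

theorem eq_of_smul_pauliTensor_eq {ε ε' : ℂ} {a b : I₁ ⊕ I₂ → Fin 4} (hε' : ε' = 1 ∨ ε' = -1)
    (h : ε • pauliTensor a = ε' • pauliTensor b) : a = b := by
  replace hε' : ε' ≠ 0 := by rcases hε' with rfl | rfl <;> norm_num
  by_contra hab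
  have htr := congrArg (fun M => (M * pauliTensor b).trace) h
  simp only [smul_mul, trace_smul, trace_pauliTensor_mul_of_ne hab, pauliTensor_mul_self,
    trace_one_config, smul_eq_mul, mul_zero] at htr
  exact mul_ne_zero hε' (pow_ne_zero _ two_ne_zero) htr.symm

theorem pA2_smul_pauliTensor {ε : ℂ} (hε : ε = 1 ∨ ε = -1) (a : I₁ ⊕ I₂ → Fin 4) :
    pA2 (ε • pauliTensor a) = pauliTensorOn2 (a ∘ Sum.inr) := by
  have hp : IsPauli (ε • pauliTensor a) := ⟨ε, a, hε, rfl⟩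
  obtain ⟨hs, heq⟩ := Classical.choose_spec (Classical.choose_spec hp)
  rw [pA2, dif_pos hp, ← eq_of_smul_pauliTensor_eq hs heq]
  rfl

theorem pauliTensor_mul_pauliTensor_elim_zero (a : I₁ ⊕ I₂ → Fin 4) :
    pauliTensor a * pauliTensor (Sum.elim 0 (a ∘ Sum.inr)) =
      pauliTensor (Sum.elim (a ∘ Sum.inl) 0) := by
  simp only [pauliTensor_eq_kronecker, ← mul_kronecker_mul, Sum.elim_comp_inl, Sum.elim_comp_inr,
    pauliTensorOn2_zero, pauliTensorOn2_mul_self, mul_one]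

theorem commute_pauliTensor_elim_zero {ε : ℂ} (hε : ε = 1 ∨ ε = -1) {a : I₁ ⊕ I₂ → Fin 4}
    {N : Matrix (Config I₁ I₂) (Config I₁ I₂) ℂ} (hN : IsPauli N)
    (h : Commute (pA2 (ε • pauliTensor a)) (pA2 N)) :
    Commute (pauliTensor (Sum.elim 0 (a ∘ Sum.inr))) N := by
  obtain ⟨δ, b, hδ, rfl⟩ := hN
  rw [pA2_smul_pauliTensor hε, pA2_smul_pauliTensor hδ] at h
  refine Commute.smul_right ?_ δ
  rw [pauliTensor_eq_kronecker, pauliTensor_eq_kronecker, Sum.elim_comp_inl, Sum.elim_comp_inr,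
    pauliTensorOn2_zero, Commute, SemiconjBy, ← mul_kronecker_mul, ← mul_kronecker_mul, one_mul,
    mul_one, h.eq]

end PauliAlgebra

namespace StabilizerGroup

variable {I₁ I₂ : Type} [Fintype I₁] [Fintype I₂] [DecidableEq I₁] [DecidableEq I₂]
  (G : StabilizerGroup I₁ I₂)

theorem mul_sum_carrier {g : Matrix (Config I₁ I₂) (Config I₁ I₂) ℂ} (hg : g ∈ G.carrier) :
    g * ∑ h ∈ G.carrier, h = ∑ h ∈ G.carrier, h := by
  have hinv : ∀ h, g * (g * h) = h := fun h => by rw [← mul_assoc, G.sq_eq_one g hg, one_mul]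
  rw [Finset.mul_sum]
  exact Finset.sum_nbij' (g * ·) (g * ·) (fun h hh => G.mul_mem g hg h hh)
    (fun h hh => G.mul_mem g hg h hh) (fun h _ => hinv h) (fun h _ => hinv h) fun _ _ => rfl

theorem trace_eq_zero_of_mem {g : Matrix (Config I₁ I₂) (Config I₁ I₂) ℂ} (hg : g ∈ G.carrier)
    (hg1 : g ≠ 1) : g.trace = 0 := by
  obtain ⟨δ, b, hδ, rfl⟩ := G.isPauli g hg
  rcases eq_or_ne b 0 with rfl | hb
  · rcases hδ with rfl | rfl
    · simp [pauliTensor_zero] at hg1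
    · exact absurd (by simpa [pauliTensor_zero] using hg) G.neg_one_not_mem
  · rw [trace_smul, trace_pauliTensor_of_ne_zero hb, smul_zero]

theorem trace_stabDensity : (stabDensity G).trace = 1 := by
  rw [stabDensity, trace_smul, trace_sum,
    Finset.sum_eq_single_of_mem 1 G.one_mem fun g hg hg1 => G.trace_eq_zero_of_mem hg hg1,
    trace_one_config, smul_eq_mul, inv_mul_cancel₀ (pow_ne_zero _ two_ne_zero)]

theorem isIdempotentElem_stabDensity
    (hfull : G.carrier.card = 2 ^ (Fintype.card I₁ + Fintype.card I₂)) :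
    IsIdempotentElem (stabDensity G) := by
  have hsq : (∑ h ∈ G.carrier, h) * ∑ h ∈ G.carrier, h =
      (2 : ℂ) ^ (Fintype.card I₁ + Fintype.card I₂) • ∑ h ∈ G.carrier, h := by
    rw [Finset.sum_mul, Finset.sum_congr rfl fun g hg => G.mul_sum_carrier hg, Finset.sum_const,
      hfull, ← Nat.cast_smul_eq_nsmul ℂ]
    norm_num
  rw [IsIdempotentElem, stabDensity, smul_mul_smul_comm, hsq, smul_smul, mul_assoc,
    inv_mul_cancel₀ (pow_ne_zero _ two_ne_zero), mul_one]

theorem trace_stabDensity_mul_pauliTensor {a : I₁ ⊕ I₂ → Fin 4}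
    (hpos : pauliTensor a ∉ G.carrier) (hneg : -pauliTensor a ∉ G.carrier) :
    (stabDensity G * pauliTensor a).trace = 0 := by
  rw [stabDensity, smul_mul, trace_smul, Finset.sum_mul, trace_sum, Finset.sum_eq_zero, smul_zero]
  intro h hh
  obtain ⟨δ, b, hδ, rfl⟩ := G.isPauli h hh
  have hba : b ≠ a := by
    rintro rfl
    rcases hδ with rfl | rfl
    · exact hpos (by simpa using hh)
    · exact hneg (by simpa using hh)
  rw [smul_mul, trace_smul, trace_pauliTensor_mul_of_ne hba, smul_zero]

theorem exists_sign_smul_mem_of_commute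
    (hfull : G.carrier.card = 2 ^ (Fintype.card I₁ + Fintype.card I₂)) (a : I₁ ⊕ I₂ → Fin 4)
    (hcomm : ∀ h ∈ G.carrier, Commute (pauliTensor a) h) :
    ∃ σ : ℂ, (σ = 1 ∨ σ = -1) ∧ σ • pauliTensor a ∈ G.carrier := by
  by_contra! hnot
  set P := pauliTensor a
  set ρ := stabDensity G
  set Q : Matrix (Config I₁ I₂) (Config I₁ I₂) ℂ := (2 : ℂ)⁻¹ • (1 + P)
  have hPρ : Commute P ρ := (Commute.sum_right _ _ _ hcomm).smul_right _
  have hQ : IsIdempotentElem Q := by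
    rw [IsIdempotentElem, smul_mul_smul_comm, add_mul, mul_add, mul_add, one_mul, one_mul, mul_one,
      pauliTensor_mul_self]
    module
  have hρQ : IsIdempotentElem (ρ * Q) :=
    .mul_of_commute ((Commute.one_left ρ).add_left hPρ |>.symm.smul_right _)
      (G.isIdempotentElem_stabDensity hfull) hQ
  have htr : (ρ * Q).trace = 2⁻¹ := by
    rw [Matrix.mul_smul, trace_smul, mul_add, mul_one, trace_add, trace_stabDensity,
      G.trace_stabDensity_mul_pauliTensor (by simpa using hnot 1) (by simpa using hnot (-1))]
    norm_num
  have hrank : ((2 * Module.finrank ℂ (LinearMap.range (ρ * Q).toLin') : ℕ) : ℂ) = 1 := by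
    push_cast
    rw [← trace_eq_finrank_of_isIdempotentElem hρQ, htr]
    norm_num
  have := Nat.cast_eq_one.mp hrank
  omega

end StabilizerGroup

/-- For a pure (full-rank) stabilizer state: if `g ∈ G` is such that its
`A₂`-restriction commutes with the `A₂`-restriction of every element of `G`, then
`g` lies in the product `G_{A1}·G_{A2}` of the subgroups of elements supported in
`A₁` and in `A₂`. -/
theorem mem_prod_of_pA2_commute {I₁ I₂ : Type} [Fintype I₁] [Fintype I₂]
    [DecidableEq I₁] [DecidableEq I₂]
    (G : StabilizerGroup I₁ I₂)
    (hfull : G.carrier.card = 2 ^ (Fintype.card I₁ + Fintype.card I₂))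
    (g : Matrix (Config I₁ I₂) (Config I₁ I₂) ℂ) (hg : g ∈ G.carrier)
    (hcomm : ∀ h ∈ G.carrier, Commute (pA2 g) (pA2 h)) :
    ∃ g₁ g₂, g₁ ∈ G.carrier ∧ SupportedIn1 g₁ ∧ g₂ ∈ G.carrier ∧ SupportedIn2 g₂ ∧
      g = g₁ * g₂ := by
  obtain ⟨ε, a, hε, rfl⟩ := G.isPauli g hg
  obtain ⟨σ, hσ, hP⟩ := G.exists_sign_smul_mem_of_commute hfull (Sum.elim 0 (a ∘ Sum.inr))
    fun h hh => commute_pauliTensor_elim_zero hε (G.isPauli h hh) (hcomm h hh)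
  have hsign : ε * σ = 1 ∨ ε * σ = -1 := by
    rcases hε with rfl | rfl <;> rcases hσ with rfl | rfl <;> norm_num
  refine ⟨_, _, G.mul_mem _ hg _ hP, ⟨ε * σ, Sum.elim (a ∘ Sum.inl) 0, hsign, ?_, fun _ => rfl⟩,
    hP, ⟨σ, _, hσ, rfl, fun _ => rfl⟩, ?_⟩
  · rw [smul_mul_smul_comm, pauliTensor_mul_pauliTensor_elim_zero]
  · rw [mul_assoc, G.sq_eq_one _ hP, mul_one]
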